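/- Each of the following seven Hermitian 9×9 matrices commutes with both V(a) ⊗ V(a) and V(x) ⊗ V(x) (Kronecker products): Ĵ₁ = S^z ⊗ S^z; Ĵ₂ = (S^z)² ⊗ (S^z)²; Ĵ₃ = (S^+)² ⊗ (S^−)² + (S^−)² ⊗ (S^+)²; Ĵ₄ = (S^+S^z) ⊗ (S^−S^z) + (S^−S^z) ⊗ (S^+S^z) + h.c.; Ĵ₅ = (S^−S^z) ⊗ (S^zS^+) + (S^+S^z) ⊗ (S^zS^−) + h.c.; Ĵ₆ = (S^+S^z) ⊗ (S^+)² + (S^−S^z) ⊗ (S^−)² + h.c.; Ĵ₇ = (S^+)² ⊗ (S^+S^z) + (S^−)² ⊗ (S^−S^z) + h.c., where h.c. denotes the conjugate transpose of the preceding terms. -/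
import Mathlib


open Matrix Complex
open scoped Kronecker

noncomputable section

def ω : ℂ := Complex.exp (2 * Real.pi * Complex.I / 3)

def Va : Matrix (Fin 3) (Fin 3) ℂ := !![ω, 0, 0; 0, 1, 0; 0, 0, (starRingEnd ℂ) ω]

def Vx : Matrix (Fin 3) (Fin 3) ℂ := !![0, 0, 1; 0, -1, 0; 1, 0, 0]

def Sz : Matrix (Fin 3) (Fin 3) ℂ := !![1, 0, 0; 0, 0, 0; 0, 0, -1]

def Sx : Matrix (Fin 3) (Fin 3) ℂ :=
  ((Real.sqrt 2 : ℂ))⁻¹ • !![0, 1, 0; 1, 0, 1; 0, 1, 0]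

def Sy : Matrix (Fin 3) (Fin 3) ℂ :=
  ((Real.sqrt 2 : ℂ))⁻¹ • !![0, -Complex.I, 0; Complex.I, 0, -Complex.I; 0, Complex.I, 0]

def Sp : Matrix (Fin 3) (Fin 3) ℂ := ((Real.sqrt 2 : ℂ))⁻¹ • (Sx + Complex.I • Sy)

def Sm : Matrix (Fin 3) (Fin 3) ℂ := ((Real.sqrt 2 : ℂ))⁻¹ • (Sx - Complex.I • Sy)

lemma sqrt2_sq : ((Real.sqrt 2 : ℂ))⁻¹ ^ 2 = 2⁻¹ := by
  rw [sq, ← mul_inv, ← Complex.ofReal_mul, Real.mul_self_sqrt (by norm_num)]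
  norm_num

lemma sqrt2_sq' : ((Real.sqrt 2 : ℂ)) ^ 2 = 2 := by
  norm_cast
  exact Real.sq_sqrt (by norm_num)

lemma Sp_eq : Sp = !![0, 1, 0; 0, 0, 1; 0, 0, 0] := by
  ext i j
  fin_cases i <;> fin_cases j <;>
    simp [Sp, Sx, Sy, smul_smul, Matrix.vecHead, Matrix.vecTail] <;> ring_nf <;>
    simp [Complex.I_sq, sqrt2_sq, sqrt2_sq'] <;> norm_num

lemma Sm_eq : Sm = !![0, 0, 0; 1, 0, 0; 0, 1, 0] := by
  ext i j
  fin_cases i <;> fin_cases j <;>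
    simp [Sm, Sx, Sy, smul_smul, Matrix.vecHead, Matrix.vecTail] <;> ring_nf <;>
    simp [Complex.I_sq, sqrt2_sq, sqrt2_sq'] <;> norm_num

lemma hω3 : ω ^ 3 = 1 := by
  rw [ω, ← Complex.exp_nat_mul]
  rw [show (3:ℕ) * (2 * (Real.pi:ℂ) * Complex.I / 3) = 2 * Real.pi * Complex.I by push_cast; ring]
  exact Complex.exp_two_pi_mul_I

lemma hωc : (starRingEnd ℂ) ω = ω ^ 2 := by
  have h1 : ω * (starRingEnd ℂ) ω = 1 := by
    rw [ω, ← Complex.exp_conj, ← Complex.exp_add]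
    rw [show (2 * (Real.pi:ℂ) * Complex.I / 3) + (starRingEnd ℂ) (2 * (Real.pi:ℂ) * Complex.I / 3) = 0 by
      simp [map_div₀, _root_.map_mul, map_ofNat, Complex.conj_I, Complex.conj_ofReal]; ring]
    exact Complex.exp_zero
  calc (starRingEnd ℂ) ω = ω ^ 3 * (starRingEnd ℂ) ω := by rw [hω3, one_mul]
    _ = ω ^ 2 * (ω * (starRingEnd ℂ) ω) := by ring
    _ = ω ^ 2 := by rw [h1, mul_one]

lemma Va_eq : Va = !![ω, 0, 0; 0, 1, 0; 0, 0, ω ^ 2] := by rw [Va, hωc]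

lemma Sz_Va : Sz * Va = (1:ℂ) • (Va * Sz) := by
  rw [Va_eq, Sz]
  ext i j; fin_cases i <;> fin_cases j <;>
    simp [Matrix.mul_apply, Fin.sum_univ_three, Matrix.vecHead, Matrix.vecTail]

lemma Sp_Va : Sp * Va = ω ^ 2 • (Va * Sp) := by
  rw [Va_eq, Sp_eq]
  ext i j; fin_cases i <;> fin_cases j <;>
    simp [Matrix.mul_apply, Fin.sum_univ_three, Matrix.vecHead, Matrix.vecTail] <;>
    first
      | ring1
      | linear_combination hω3
      | linear_combination -hω3
      | linear_combination ω * hω3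
      | linear_combination (2:ℂ) * hω3

lemma Sm_Va : Sm * Va = ω • (Va * Sm) := by
  rw [Va_eq, Sm_eq]
  ext i j; fin_cases i <;> fin_cases j <;>
    simp [Matrix.mul_apply, Fin.sum_univ_three, Matrix.vecHead, Matrix.vecTail] <;>
    first
      | ring1
      | linear_combination hω3
      | linear_combination -hω3
      | linear_combination ω * hω3
      | linear_combination (2:ℂ) * hω3

lemma Sz_Vx : Sz * Vx = (-1:ℂ) • (Vx * Sz) := by
  rw [Vx, Sz]
  ext i j; fin_cases i <;> fin_cases j <;>
    simp [Matrix.mul_apply, Fin.sum_univ_three, Matrix.vecHead, Matrix.vecTail]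

lemma Sp_Vx : Sp * Vx = (-1:ℂ) • (Vx * Sm) := by
  rw [Vx, Sp_eq, Sm_eq]
  ext i j; fin_cases i <;> fin_cases j <;>
    simp [Matrix.mul_apply, Fin.sum_univ_three, Matrix.vecHead, Matrix.vecTail]

lemma Sm_Vx : Sm * Vx = (-1:ℂ) • (Vx * Sp) := by
  rw [Vx, Sp_eq, Sm_eq]
  ext i j; fin_cases i <;> fin_cases j <;>
    simp [Matrix.mul_apply, Fin.sum_univ_three, Matrix.vecHead, Matrix.vecTail]

lemma Sz_H : Szᴴ = Sz := by
  rw [Sz]; ext i j; fin_cases i <;> fin_cases j <;> simp [Matrix.vecHead, Matrix.vecTail]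

lemma Sp_H : Spᴴ = Sm := by
  rw [Sp_eq, Sm_eq]; ext i j; fin_cases i <;> fin_cases j <;> simp [Matrix.vecHead, Matrix.vecTail]

lemma Sm_H : Smᴴ = Sp := by
  rw [Sp_eq, Sm_eq]; ext i j; fin_cases i <;> fin_cases j <;> simp [Matrix.vecHead, Matrix.vecTail]

lemma kron_H (A B : Matrix (Fin 3) (Fin 3) ℂ) : (A ⊗ₖ B)ᴴ = Aᴴ ⊗ₖ Bᴴ := by
  ext i j
  simp [Matrix.conjTranspose_apply, Matrix.kroneckerMap_apply, mul_comm]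

lemma mulV {A B A' B' V : Matrix (Fin 3) (Fin 3) ℂ} {c d : ℂ}
    (hA : A * V = c • (V * A')) (hB : B * V = d • (V * B')) :
    (A * B) * V = (c * d) • (V * (A' * B')) := by
  rw [mul_assoc, hB, mul_smul_comm, ← mul_assoc, hA, smul_mul_assoc, smul_smul, mul_comm d c, mul_assoc]

lemma kronV {A B A' B' V W : Matrix (Fin 3) (Fin 3) ℂ} {c d : ℂ}
    (hA : A * V = c • (V * A')) (hB : B * W = d • (W * B')) (hcd : c * d = 1) :
    (A ⊗ₖ B) * (V ⊗ₖ W) = (V ⊗ₖ W) * (A' ⊗ₖ B') := by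
  rw [← Matrix.mul_kronecker_mul, hA, hB, Matrix.smul_kronecker, Matrix.kronecker_smul,
    smul_smul, hcd, one_smul, Matrix.mul_kronecker_mul]

-- scalar phase facts
lemma c111 : (1:ℂ) * 1 = 1 := by norm_num
lemma c1111 : ((1:ℂ) * 1) * (1 * 1) = 1 := by norm_num
lemma c33 : (ω ^ 2 * ω ^ 2) * (ω * ω) = 1 := by linear_combination (ω ^ 3 + 1) * hω3
lemma c33' : (ω * ω) * (ω ^ 2 * ω ^ 2) = 1 := by linear_combination (ω ^ 3 + 1) * hω3
lemma c21 : (ω ^ 2 * 1) * (ω * 1) = 1 := by linear_combination hω3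
lemma c12 : (ω * 1) * (ω ^ 2 * 1) = 1 := by linear_combination hω3
lemma c21' : (1 * ω) * (1 * ω ^ 2) = 1 := by linear_combination hω3
lemma c12' : (1 * ω ^ 2) * (1 * ω) = 1 := by linear_combination hω3
lemma c_mz_zp : (ω * 1) * (1 * ω ^ 2) = 1 := by linear_combination hω3
lemma c_pz_zm : (ω ^ 2 * 1) * (1 * ω) = 1 := by linear_combination hω3
lemma c_zp_mz : (1 * ω ^ 2) * (ω * 1) = 1 := by linear_combination hω3
lemma c_zm_pz : (1 * ω) * (ω ^ 2 * 1) = 1 := by linear_combination hω3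
lemma c_pz_pp : (ω ^ 2 * 1) * (ω ^ 2 * ω ^ 2) = 1 := by linear_combination (ω ^ 3 + 1) * hω3
lemma c_mz_mm : (ω * 1) * (ω * ω) = 1 := by linear_combination hω3
lemma c_zm_mm : (1 * ω) * (ω * ω) = 1 := by linear_combination hω3
lemma c_zp_pp : (1 * ω ^ 2) * (ω ^ 2 * ω ^ 2) = 1 := by linear_combination (ω ^ 3 + 1) * hω3
lemma c_pp_pz : (ω ^ 2 * ω ^ 2) * (ω ^ 2 * 1) = 1 := by linear_combination (ω ^ 3 + 1) * hω3
lemma c_mm_mz : (ω * ω) * (ω * 1) = 1 := by linear_combination hω3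
lemma c_mm_zm : (ω * ω) * (1 * ω) = 1 := by linear_combination hω3
lemma c_pp_zp : (ω ^ 2 * ω ^ 2) * (1 * ω ^ 2) = 1 := by linear_combination (ω ^ 3 + 1) * hω3
lemma cneg : ((-1:ℂ) * -1) * (-1 * -1) = 1 := by norm_num
lemma cneg1 : ((-1:ℂ)) * (-1) = 1 := by norm_num

/-- Ĵ₁ = Sᶻ ⊗ Sᶻ -/
def J1 : Matrix (Fin 3 × Fin 3) (Fin 3 × Fin 3) ℂ := Sz ⊗ₖ Sz

/-- Ĵ₂ = (Sᶻ)² ⊗ (Sᶻ)² -/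
def J2 : Matrix (Fin 3 × Fin 3) (Fin 3 × Fin 3) ℂ := (Sz * Sz) ⊗ₖ (Sz * Sz)

/-- Ĵ₃ = (S⁺)² ⊗ (S⁻)² + (S⁻)² ⊗ (S⁺)² -/
def J3 : Matrix (Fin 3 × Fin 3) (Fin 3 × Fin 3) ℂ :=
  (Sp * Sp) ⊗ₖ (Sm * Sm) + (Sm * Sm) ⊗ₖ (Sp * Sp)

/-- Ĵ₄ = (S⁺Sᶻ) ⊗ (S⁻Sᶻ) + (S⁻Sᶻ) ⊗ (S⁺Sᶻ) + h.c. -/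
def J4 : Matrix (Fin 3 × Fin 3) (Fin 3 × Fin 3) ℂ :=
  ((Sp * Sz) ⊗ₖ (Sm * Sz) + (Sm * Sz) ⊗ₖ (Sp * Sz)) +
    ((Sp * Sz) ⊗ₖ (Sm * Sz) + (Sm * Sz) ⊗ₖ (Sp * Sz))ᴴ

/-- Ĵ₅ = (S⁻Sᶻ) ⊗ (SᶻS⁺) + (S⁺Sᶻ) ⊗ (SᶻS⁻) + h.c. -/
def J5 : Matrix (Fin 3 × Fin 3) (Fin 3 × Fin 3) ℂ :=
  ((Sm * Sz) ⊗ₖ (Sz * Sp) + (Sp * Sz) ⊗ₖ (Sz * Sm)) +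
    ((Sm * Sz) ⊗ₖ (Sz * Sp) + (Sp * Sz) ⊗ₖ (Sz * Sm))ᴴ

/-- Ĵ₆ = (S⁺Sᶻ) ⊗ (S⁺)² + (S⁻Sᶻ) ⊗ (S⁻)² + h.c. -/
def J6 : Matrix (Fin 3 × Fin 3) (Fin 3 × Fin 3) ℂ :=
  ((Sp * Sz) ⊗ₖ (Sp * Sp) + (Sm * Sz) ⊗ₖ (Sm * Sm)) +
    ((Sp * Sz) ⊗ₖ (Sp * Sp) + (Sm * Sz) ⊗ₖ (Sm * Sm))ᴴ

/-- Ĵ₇ = (S⁺)² ⊗ (S⁺Sᶻ) + (S⁻)² ⊗ (S⁻Sᶻ) + h.c. -/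
def J7 : Matrix (Fin 3 × Fin 3) (Fin 3 × Fin 3) ℂ :=
  ((Sp * Sp) ⊗ₖ (Sp * Sz) + (Sm * Sm) ⊗ₖ (Sm * Sz)) +
    ((Sp * Sp) ⊗ₖ (Sp * Sz) + (Sm * Sm) ⊗ₖ (Sm * Sz))ᴴ

lemma hJ4 : J4 = ((Sp*Sz) ⊗ₖ (Sm*Sz) + (Sm*Sz) ⊗ₖ (Sp*Sz)) +
    ((Sz*Sm) ⊗ₖ (Sz*Sp) + (Sz*Sp) ⊗ₖ (Sz*Sm)) := by
  rw [J4, Matrix.conjTranspose_add, kron_H, kron_H]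
  simp only [Matrix.conjTranspose_mul]
  rw [Sp_H, Sm_H, Sz_H]

lemma hJ5 : J5 = ((Sm*Sz) ⊗ₖ (Sz*Sp) + (Sp*Sz) ⊗ₖ (Sz*Sm)) +
    ((Sz*Sp) ⊗ₖ (Sm*Sz) + (Sz*Sm) ⊗ₖ (Sp*Sz)) := by
  rw [J5, Matrix.conjTranspose_add, kron_H, kron_H]
  simp only [Matrix.conjTranspose_mul]
  rw [Sp_H, Sm_H, Sz_H]

lemma hJ6 : J6 = ((Sp*Sz) ⊗ₖ (Sp*Sp) + (Sm*Sz) ⊗ₖ (Sm*Sm)) +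
    ((Sz*Sm) ⊗ₖ (Sm*Sm) + (Sz*Sp) ⊗ₖ (Sp*Sp)) := by
  rw [J6, Matrix.conjTranspose_add, kron_H, kron_H]
  simp only [Matrix.conjTranspose_mul]
  rw [Sp_H, Sm_H, Sz_H]

lemma hJ7 : J7 = ((Sp*Sp) ⊗ₖ (Sp*Sz) + (Sm*Sm) ⊗ₖ (Sm*Sz)) +
    ((Sm*Sm) ⊗ₖ (Sz*Sm) + (Sp*Sp) ⊗ₖ (Sz*Sp)) := by
  rw [J7, Matrix.conjTranspose_add, kron_H, kron_H]
  simp only [Matrix.conjTranspose_mul]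
  rw [Sp_H, Sm_H, Sz_H]

/-- each of the seven Hermitian matrices `Ĵ₁, …, Ĵ₇` commutes with both
`V(a) ⊗ V(a)` and `V(x) ⊗ V(x)`. -/
theorem seven_symmetric_two_spin_operators :
    (J1.IsHermitian ∧ Commute J1 (Va ⊗ₖ Va) ∧ Commute J1 (Vx ⊗ₖ Vx))
    ∧ (J2.IsHermitian ∧ Commute J2 (Va ⊗ₖ Va) ∧ Commute J2 (Vx ⊗ₖ Vx))
    ∧ (J3.IsHermitian ∧ Commute J3 (Va ⊗ₖ Va) ∧ Commute J3 (Vx ⊗ₖ Vx))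
    ∧ (J4.IsHermitian ∧ Commute J4 (Va ⊗ₖ Va) ∧ Commute J4 (Vx ⊗ₖ Vx))
    ∧ (J5.IsHermitian ∧ Commute J5 (Va ⊗ₖ Va) ∧ Commute J5 (Vx ⊗ₖ Vx))
    ∧ (J6.IsHermitian ∧ Commute J6 (Va ⊗ₖ Va) ∧ Commute J6 (Vx ⊗ₖ Vx))
    ∧ (J7.IsHermitian ∧ Commute J7 (Va ⊗ₖ Va) ∧ Commute J7 (Vx ⊗ₖ Vx)) := by
  refine ⟨⟨?_, ?_, ?_⟩, ⟨?_, ?_, ?_⟩, ⟨?_, ?_, ?_⟩, ⟨?_, ?_, ?_⟩, ⟨?_, ?_, ?_⟩,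
    ⟨?_, ?_, ?_⟩, ⟨?_, ?_, ?_⟩⟩
  · show J1ᴴ = J1
    rw [J1, kron_H, Sz_H]
  · exact (kronV Sz_Va Sz_Va c111 : J1 * _ = _ * J1)
  · exact (kronV Sz_Vx Sz_Vx cneg1 : J1 * _ = _ * J1)
  · show J2ᴴ = J2
    rw [J2, kron_H, Matrix.conjTranspose_mul, Sz_H]
  · exact (kronV (mulV Sz_Va Sz_Va) (mulV Sz_Va Sz_Va) c1111 : J2 * _ = _ * J2)
  · exact (kronV (mulV Sz_Vx Sz_Vx) (mulV Sz_Vx Sz_Vx) cneg : J2 * _ = _ * J2)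
  · show J3ᴴ = J3
    rw [J3, Matrix.conjTranspose_add, kron_H, kron_H]
    simp only [Matrix.conjTranspose_mul]
    rw [Sp_H, Sm_H, add_comm]
  · show J3 * _ = _ * J3
    rw [J3, add_mul, kronV (mulV Sp_Va Sp_Va) (mulV Sm_Va Sm_Va) c33,
      kronV (mulV Sm_Va Sm_Va) (mulV Sp_Va Sp_Va) c33', mul_add]
  · show J3 * _ = _ * J3
    rw [J3, add_mul, kronV (mulV Sp_Vx Sp_Vx) (mulV Sm_Vx Sm_Vx) cneg,
      kronV (mulV Sm_Vx Sm_Vx) (mulV Sp_Vx Sp_Vx) cneg, mul_add]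
    abel
  · exact Matrix.isHermitian_add_transpose_self _
  · show J4 * _ = _ * J4
    rw [hJ4, add_mul, add_mul, add_mul,
      kronV (mulV Sp_Va Sz_Va) (mulV Sm_Va Sz_Va) c21,
      kronV (mulV Sm_Va Sz_Va) (mulV Sp_Va Sz_Va) c12,
      kronV (mulV Sz_Va Sm_Va) (mulV Sz_Va Sp_Va) c21',
      kronV (mulV Sz_Va Sp_Va) (mulV Sz_Va Sm_Va) c12',
      mul_add, mul_add, mul_add]
  · show J4 * _ = _ * J4
    rw [hJ4, add_mul, add_mul, add_mul,
      kronV (mulV Sp_Vx Sz_Vx) (mulV Sm_Vx Sz_Vx) cneg,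
      kronV (mulV Sm_Vx Sz_Vx) (mulV Sp_Vx Sz_Vx) cneg,
      kronV (mulV Sz_Vx Sm_Vx) (mulV Sz_Vx Sp_Vx) cneg,
      kronV (mulV Sz_Vx Sp_Vx) (mulV Sz_Vx Sm_Vx) cneg,
      mul_add, mul_add, mul_add]
    abel
  · exact Matrix.isHermitian_add_transpose_self _
  · show J5 * _ = _ * J5
    rw [hJ5, add_mul, add_mul, add_mul,
      kronV (mulV Sm_Va Sz_Va) (mulV Sz_Va Sp_Va) c_mz_zp,
      kronV (mulV Sp_Va Sz_Va) (mulV Sz_Va Sm_Va) c_pz_zm,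
      kronV (mulV Sz_Va Sp_Va) (mulV Sm_Va Sz_Va) c_zp_mz,
      kronV (mulV Sz_Va Sm_Va) (mulV Sp_Va Sz_Va) c_zm_pz,
      mul_add, mul_add, mul_add]
  · show J5 * _ = _ * J5
    rw [hJ5, add_mul, add_mul, add_mul,
      kronV (mulV Sm_Vx Sz_Vx) (mulV Sz_Vx Sp_Vx) cneg,
      kronV (mulV Sp_Vx Sz_Vx) (mulV Sz_Vx Sm_Vx) cneg,
      kronV (mulV Sz_Vx Sp_Vx) (mulV Sm_Vx Sz_Vx) cneg,
      kronV (mulV Sz_Vx Sm_Vx) (mulV Sp_Vx Sz_Vx) cneg,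
      mul_add, mul_add, mul_add]
    abel
  · exact Matrix.isHermitian_add_transpose_self _
  · show J6 * _ = _ * J6
    rw [hJ6, add_mul, add_mul, add_mul,
      kronV (mulV Sp_Va Sz_Va) (mulV Sp_Va Sp_Va) c_pz_pp,
      kronV (mulV Sm_Va Sz_Va) (mulV Sm_Va Sm_Va) c_mz_mm,
      kronV (mulV Sz_Va Sm_Va) (mulV Sm_Va Sm_Va) c_zm_mm,
      kronV (mulV Sz_Va Sp_Va) (mulV Sp_Va Sp_Va) c_zp_pp,
      mul_add, mul_add, mul_add]
  · show J6 * _ = _ * J6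
    rw [hJ6, add_mul, add_mul, add_mul,
      kronV (mulV Sp_Vx Sz_Vx) (mulV Sp_Vx Sp_Vx) cneg,
      kronV (mulV Sm_Vx Sz_Vx) (mulV Sm_Vx Sm_Vx) cneg,
      kronV (mulV Sz_Vx Sm_Vx) (mulV Sm_Vx Sm_Vx) cneg,
      kronV (mulV Sz_Vx Sp_Vx) (mulV Sp_Vx Sp_Vx) cneg,
      mul_add, mul_add, mul_add]
    abel
  · exact Matrix.isHermitian_add_transpose_self _
  · show J7 * _ = _ * J7
    rw [hJ7, add_mul, add_mul, add_mul,
      kronV (mulV Sp_Va Sp_Va) (mulV Sp_Va Sz_Va) c_pp_pz,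
      kronV (mulV Sm_Va Sm_Va) (mulV Sm_Va Sz_Va) c_mm_mz,
      kronV (mulV Sm_Va Sm_Va) (mulV Sz_Va Sm_Va) c_mm_zm,
      kronV (mulV Sp_Va Sp_Va) (mulV Sz_Va Sp_Va) c_pp_zp,
      mul_add, mul_add, mul_add]
  · show J7 * _ = _ * J7
    rw [hJ7, add_mul, add_mul, add_mul,
      kronV (mulV Sp_Vx Sp_Vx) (mulV Sp_Vx Sz_Vx) cneg,
      kronV (mulV Sm_Vx Sm_Vx) (mulV Sm_Vx Sz_Vx) cneg,
      kronV (mulV Sm_Vx Sm_Vx) (mulV Sz_Vx Sm_Vx) cneg,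
      kronV (mulV Sp_Vx Sp_Vx) (mulV Sz_Vx Sp_Vx) cneg,
      mul_add, mul_add, mul_add]
    abel
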